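/- Let 0 < ρ₁ < r < ρ₂, let A = {x ∈ ℝ² : ρ₁ < |x| < ρ₂}, let Y ≠ 0 and ν be real constants, and let μ₁, μ₂ : A → ℝ be C³ and σ̄ : A → ℝ be C² with σ̄ = −(1/2) ∂μ₁/∂x = −(1/2) ∂μ₂/∂y and ∂μ₁/∂y + ∂μ₂/∂x = 0 on A. Set ε̄ = (1−2ν)(1+ν) σ̄ / Y and k = −(1−2ν)(1+ν)/(2Y), fix X = (X₁, X₂) ∈ ℝ², and parametrize the circle of radius r by γ(θ) = (r cos θ, r sin θ), θ ∈ [0, 2π]. Then ∫₀^{2π} (X₂ − r sin θ) [ (∂ε̄/∂y)(γ(θ)) (−r sin θ) − (∂ε̄/∂x)(γ(θ)) (r cos θ) ] dθ = k ∫₀^{2π} (∂μ₁/∂y)(γ(θ)) (r cos θ) dθ. -/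

import Mathlib

open Real

/-- Partial derivative in the `x` direction of a function on `ℝ²`. -/
noncomputable def pdx (f : ℝ × ℝ → ℝ) : ℝ × ℝ → ℝ := fun p => fderiv ℝ f p (1, 0)

/-- Partial derivative in the `y` direction of a function on `ℝ²`. -/
noncomputable def pdy (f : ℝ × ℝ → ℝ) : ℝ × ℝ → ℝ := fun p => fderiv ℝ f p (0, 1)

/-!
Writing `G = ∂μ₁/∂y`, the relations `σ̄ = −½ ∂ₓμ₁ = −½ ∂ᵧμ₂` and `∂ᵧμ₁ = −∂ₓμ₂` together with the
symmetry of second derivatives give `∂ᵧσ̄ = −½ ∂ₓG` and `∂ₓσ̄ = ½ ∂ᵧG`. Hence the integrand is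
`k (X₂ − r sin θ) · d/dθ G(γ θ)`, and one integration by parts around the closed curve, whose
boundary term vanishes, turns it into `k ∫ G(γ θ) r cos θ dθ`.
-/

open Set Filter Topology intervalIntegral

lemma fderiv_fderiv_apply {E F : Type*} [NormedAddCommGroup E] [NormedSpace ℝ E]
    [NormedAddCommGroup F] [NormedSpace ℝ F] {f : E → F} {p : E}
    (hf : DifferentiableAt ℝ (fderiv ℝ f) p) (v w : E) :
    fderiv ℝ (fun q => fderiv ℝ f q v) p w = fderiv ℝ (fderiv ℝ f) p w v := by
  rw [fderiv_clm_apply hf (differentiableAt_const v)]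
  simp

section PartialDerivatives

variable {f g : ℝ × ℝ → ℝ} {p : ℝ × ℝ}

lemma pdx_congr (h : f =ᶠ[𝓝 p] g) : pdx f p = pdx g p := by
  simp only [pdx, h.fderiv_eq]

lemma pdy_congr (h : f =ᶠ[𝓝 p] g) : pdy f p = pdy g p := by
  simp only [pdy, h.fderiv_eq]

lemma pdx_const_mul (c : ℝ) (f : ℝ × ℝ → ℝ) (p : ℝ × ℝ) :
    pdx (fun q => c * f q) p = c * pdx f p := by
  simp [pdx, ← smul_eq_mul, ← Pi.smul_def, fderiv_const_smul_field]

lemma pdy_const_mul (c : ℝ) (f : ℝ × ℝ → ℝ) (p : ℝ × ℝ) :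
    pdy (fun q => c * f q) p = c * pdy f p := by
  simp [pdy, ← smul_eq_mul, ← Pi.smul_def, fderiv_const_smul_field]

lemma pdy_neg (f : ℝ × ℝ → ℝ) (p : ℝ × ℝ) : pdy (fun q => -f q) p = -pdy f p := by
  simp [pdy]

lemma pdx_pdy_comm (hf : ContDiffAt ℝ 2 f p) : pdx (pdy f) p = pdy (pdx f) p := by
  have hd : DifferentiableAt ℝ (fderiv ℝ f) p :=
    (hf.fderiv_right le_rfl).differentiableAt one_ne_zero
  change fderiv ℝ (fun q => fderiv ℝ f q (0, 1)) p (1, 0)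
    = fderiv ℝ (fun q => fderiv ℝ f q (1, 0)) p (0, 1)
  rw [fderiv_fderiv_apply hd, fderiv_fderiv_apply hd]
  exact hf.isSymmSndFDerivAt (by simp) _ _

lemma ContDiffOn.pdx {s : Set (ℝ × ℝ)} {m n : WithTop ℕ∞} (hf : ContDiffOn ℝ n f s)
    (hs : IsOpen s) (hmn : m + 1 ≤ n) : ContDiffOn ℝ m (pdx f) s :=
  (hf.fderiv_of_isOpen hs hmn).clm_apply contDiffOn_const

lemma ContDiffOn.pdy {s : Set (ℝ × ℝ)} {m n : WithTop ℕ∞} (hf : ContDiffOn ℝ n f s)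
    (hs : IsOpen s) (hmn : m + 1 ≤ n) : ContDiffOn ℝ m (pdy f) s :=
  (hf.fderiv_of_isOpen hs hmn).clm_apply contDiffOn_const

lemma hasDerivAt_comp_pdx_add_pdy {γ : ℝ → ℝ × ℝ} {γ' : ℝ × ℝ} {t : ℝ}
    (hf : DifferentiableAt ℝ f (γ t)) (hγ : HasDerivAt γ γ' t) :
    HasDerivAt (fun s => f (γ s)) (γ'.1 * pdx f (γ t) + γ'.2 * pdy f (γ t)) t := by
  refine (hf.hasFDerivAt.comp_hasDerivAt t hγ).congr_deriv ?_
  have hγ' : γ' = γ'.1 • ((1, 0) : ℝ × ℝ) + γ'.2 • ((0, 1) : ℝ × ℝ) := by ext <;> simp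
  rw [hγ', map_add, map_smul, map_smul]
  simp [pdx, pdy]

end PartialDerivatives

section StationaryPoint

variable {A : Set (ℝ × ℝ)} {μ₁ μ₂ σ : ℝ × ℝ → ℝ} {p : ℝ × ℝ}

lemma pdy_eq_neg_half_pdx_pdy (hA : IsOpen A) (hμ₁ : ContDiffOn ℝ 2 μ₁ A)
    (hm1 : ∀ q ∈ A, σ q = -(1 / 2) * pdx μ₁ q) (hp : p ∈ A) :
    pdy σ p = -(1 / 2) * pdx (pdy μ₁) p := by
  have hσ : σ =ᶠ[𝓝 p] fun q => -(1 / 2) * pdx μ₁ q := eventually_of_mem (hA.mem_nhds hp) hm1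
  rw [pdy_congr hσ, pdy_const_mul, pdx_pdy_comm (hμ₁.contDiffAt (hA.mem_nhds hp))]

lemma pdx_eq_half_pdy_pdy (hA : IsOpen A) (hμ₂ : ContDiffOn ℝ 2 μ₂ A)
    (hm2 : ∀ q ∈ A, σ q = -(1 / 2) * pdy μ₂ q) (hm3 : ∀ q ∈ A, pdy μ₁ q + pdx μ₂ q = 0)
    (hp : p ∈ A) :
    pdx σ p = 1 / 2 * pdy (pdy μ₁) p := by
  have hσ : σ =ᶠ[𝓝 p] fun q => -(1 / 2) * pdy μ₂ q := eventually_of_mem (hA.mem_nhds hp) hm2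
  have hμ : pdx μ₂ =ᶠ[𝓝 p] fun q => -pdy μ₁ q :=
    eventually_of_mem (hA.mem_nhds hp) fun q hq => eq_neg_of_add_eq_zero_right (hm3 q hq)
  rw [pdx_congr hσ, pdx_const_mul, pdx_pdy_comm (hμ₂.contDiffAt (hA.mem_nhds hp)),
    pdy_congr hμ, pdy_neg]
  ring

end StationaryPoint

lemma isOpen_annulus (ρ₁ ρ₂ : ℝ) :
    IsOpen {p : ℝ × ℝ | ρ₁ ^ 2 < p.1 ^ 2 + p.2 ^ 2 ∧ p.1 ^ 2 + p.2 ^ 2 < ρ₂ ^ 2} := by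
  have hnorm : Continuous fun p : ℝ × ℝ => p.1 ^ 2 + p.2 ^ 2 := by fun_prop
  exact (isOpen_lt continuous_const hnorm).inter (isOpen_lt hnorm continuous_const)

lemma circle_mem_annulus {ρ₁ ρ₂ r : ℝ} (h1 : 0 ≤ ρ₁) (h2 : ρ₁ < r) (h3 : r < ρ₂) (θ : ℝ) :
    (r * cos θ, r * sin θ) ∈
      {p : ℝ × ℝ | ρ₁ ^ 2 < p.1 ^ 2 + p.2 ^ 2 ∧ p.1 ^ 2 + p.2 ^ 2 < ρ₂ ^ 2} := by
  have hr : (r * cos θ) ^ 2 + (r * sin θ) ^ 2 = r ^ 2 := by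
    linear_combination r ^ 2 * cos_sq_add_sin_sq θ
  simp only [mem_ofPred_eq, hr]
  exact ⟨pow_lt_pow_left₀ h2 h1 two_ne_zero, pow_lt_pow_left₀ h3 (h1.trans h2.le) two_ne_zero⟩

lemma hasDerivAt_circle (r θ : ℝ) :
    HasDerivAt (fun θ => (r * cos θ, r * sin θ)) (-(r * sin θ), r * cos θ) θ :=
  ((hasDerivAt_cos θ).const_mul r).prodMk ((hasDerivAt_sin θ).const_mul r) |>.congr_deriv (by simp)

lemma integral_mul_deriv_eq_neg_integral_deriv_mul {u v u' v' : ℝ → ℝ} {a b : ℝ}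
    (hu : ∀ x, HasDerivAt u (u' x) x) (hv : ∀ x, HasDerivAt v (v' x) x)
    (hu' : Continuous u') (hv' : Continuous v') (hab : u b * v b = u a * v a) :
    ∫ x in a..b, u x * v' x = -∫ x in a..b, u' x * v x := by
  rw [integral_mul_deriv_eq_deriv_mul (fun x _ => hu x) (fun x _ => hv x)
    (hu'.intervalIntegrable a b) (hv'.intervalIntegrable a b), hab, sub_self, zero_sub]

theorem stmt_11_general (ρ₁ ρ₂ r : ℝ) (h1 : 0 < ρ₁) (h2 : ρ₁ < r) (h3 : r < ρ₂)
    (A : Set (ℝ × ℝ))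
    (hA : A = {p : ℝ × ℝ | ρ₁ ^ 2 < p.1 ^ 2 + p.2 ^ 2 ∧ p.1 ^ 2 + p.2 ^ 2 < ρ₂ ^ 2})
    (Y ν : ℝ)
    (μ₁ μ₂ : ℝ × ℝ → ℝ) (hμ₁ : ContDiffOn ℝ 3 μ₁ A) (hμ₂ : ContDiffOn ℝ 3 μ₂ A)
    (σbar : ℝ × ℝ → ℝ)
    (hm1 : ∀ p ∈ A, σbar p = -(1 / 2) * pdx μ₁ p)
    (hm2 : ∀ p ∈ A, σbar p = -(1 / 2) * pdy μ₂ p)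
    (hm3 : ∀ p ∈ A, pdy μ₁ p + pdx μ₂ p = 0)
    (εbar : ℝ × ℝ → ℝ)
    (hεbar : ∀ p, εbar p = (1 - 2 * ν) * (1 + ν) * σbar p / Y)
    (k : ℝ) (hk : k = -((1 - 2 * ν) * (1 + ν)) / (2 * Y))
    (X : ℝ × ℝ)
    (γ : ℝ → ℝ × ℝ) (hγ : ∀ θ, γ θ = (r * Real.cos θ, r * Real.sin θ)) :
    ∫ θ in (0:ℝ)..(2 * π),
        (X.2 - r * Real.sin θ) *
          (pdy εbar (γ θ) * (-(r * Real.sin θ)) - pdx εbar (γ θ) * (r * Real.cos θ)) =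
      k * ∫ θ in (0:ℝ)..(2 * π), pdy μ₁ (γ θ) * (r * Real.cos θ) := by
  have hA_open : IsOpen A := hA ▸ isOpen_annulus ρ₁ ρ₂
  have hγA : ∀ θ, γ θ ∈ A := fun θ => hA ▸ hγ θ ▸ circle_mem_annulus h1.le h2 h3 θ
  have hγ_cont : Continuous γ := funext hγ ▸ by fun_prop
  set G := pdy μ₁
  have hG : ContDiffOn ℝ 1 G A := hμ₁.pdy hA_open (by norm_num)
  have hG_deriv : ∀ θ, HasDerivAt (fun θ => G (γ θ))
      (-(r * sin θ) * pdx G (γ θ) + r * cos θ * pdy G (γ θ)) θ := fun θ =>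
    hasDerivAt_comp_pdx_add_pdy
      ((hG.differentiableOn one_ne_zero).differentiableAt (hA_open.mem_nhds (hγA θ)))
      (funext hγ ▸ hasDerivAt_circle r θ)
  have hG'_cont : Continuous fun θ => -(r * sin θ) * pdx G (γ θ) + r * cos θ * pdy G (γ θ) := by
    have hGx := (hG.pdx (m := 0) hA_open (by norm_num)).continuousOn.comp_continuous hγ_cont hγA
    have hGy := (hG.pdy (m := 0) hA_open (by norm_num)).continuousOn.comp_continuous hγ_cont hγA
    fun_prop
  have hintegrand : ∀ θ, (X.2 - r * sin θ) *
      (pdy εbar (γ θ) * (-(r * sin θ)) - pdx εbar (γ θ) * (r * cos θ)) =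
      k * ((X.2 - r * sin θ) * (-(r * sin θ) * pdx G (γ θ) + r * cos θ * pdy G (γ θ))) := by
    intro θ
    have hε : εbar = fun p => (1 - 2 * ν) * (1 + ν) / Y * σbar p := funext fun p => by
      rw [hεbar]
      ring
    rw [hε, pdx_const_mul, pdy_const_mul,
      pdy_eq_neg_half_pdx_pdy hA_open (hμ₁.of_le (by norm_num)) hm1 (hγA θ),
      pdx_eq_half_pdy_pdy hA_open (hμ₂.of_le (by norm_num)) hm2 hm3 (hγA θ), hk]
    ring
  have hperiodic : (X.2 - r * sin (2 * π)) * G (γ (2 * π)) = (X.2 - r * sin 0) * G (γ 0) := by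
    simp [hγ]
  rw [integral_congr fun θ _ => hintegrand θ, integral_const_mul,
    integral_mul_deriv_eq_neg_integral_deriv_mul
      (fun θ => ((hasDerivAt_sin θ).const_mul r).const_sub X.2) hG_deriv (by fun_prop) hG'_cont
      hperiodic, ← integral_neg]
  congr 1
  exact integral_congr fun θ _ => by ring

/-- Eq. (F2fin) in the proof of the planar trace principle: for a trace-energy stationary
point with Lagrange multiplier `μ` satisfying `σ̄ I = −(1/2)∇ₛμ` on an annulus, the loop
integral `∮ (X₂ − x₂)(ε̄,₂ dx₁ − ε̄,₁ dx₂)` around a circle enclosing the hole reduces to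
`k ∮ μ₁,₂ dx₂`. -/
theorem stmt_11 (ρ₁ ρ₂ r : ℝ) (h1 : 0 < ρ₁) (h2 : ρ₁ < r) (h3 : r < ρ₂)
    (A : Set (ℝ × ℝ))
    (hA : A = {p : ℝ × ℝ | ρ₁ ^ 2 < p.1 ^ 2 + p.2 ^ 2 ∧ p.1 ^ 2 + p.2 ^ 2 < ρ₂ ^ 2})
    (Y ν : ℝ) (hY : Y ≠ 0)
    (μ₁ μ₂ : ℝ × ℝ → ℝ) (hμ₁ : ContDiffOn ℝ 3 μ₁ A) (hμ₂ : ContDiffOn ℝ 3 μ₂ A)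
    (σbar : ℝ × ℝ → ℝ) (hσ : ContDiffOn ℝ 2 σbar A)
    (hm1 : ∀ p ∈ A, σbar p = -(1 / 2) * pdx μ₁ p)
    (hm2 : ∀ p ∈ A, σbar p = -(1 / 2) * pdy μ₂ p)
    (hm3 : ∀ p ∈ A, pdy μ₁ p + pdx μ₂ p = 0)
    (εbar : ℝ × ℝ → ℝ)
    (hεbar : ∀ p, εbar p = (1 - 2 * ν) * (1 + ν) * σbar p / Y)
    (k : ℝ) (hk : k = -((1 - 2 * ν) * (1 + ν)) / (2 * Y))
    (X : ℝ × ℝ)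
    (γ : ℝ → ℝ × ℝ) (hγ : ∀ θ, γ θ = (r * Real.cos θ, r * Real.sin θ)) :
    ∫ θ in (0:ℝ)..(2 * π),
        (X.2 - r * Real.sin θ) *
          (pdy εbar (γ θ) * (-(r * Real.sin θ)) - pdx εbar (γ θ) * (r * Real.cos θ)) =
      k * ∫ θ in (0:ℝ)..(2 * π), pdy μ₁ (γ θ) * (r * Real.cos θ) :=
  stmt_11_general ρ₁ ρ₂ r h1 h2 h3 A hA Y ν μ₁ μ₂ hμ₁ hμ₂ σbar hm1 hm2 hm3 εbar hεbar k hk X γ hγ
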